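/- arXiv:1106.1143 — 2 statements merged into one kernel-verified Lean document; each statement's English description precedes it below -/
import Mathlib

section
/- Let A be the 2×2 matrix with entries A₁₁ = A₂₂ = 1 + (2ν+1)s Σ_{μ=0}^{ν-1} [C(2ν;2μ+1,ν-μ-1,ν-μ) h₀^{2μ+1} f₀^{ν-μ-1} + C(2ν;2μ,ν-μ-1,ν-μ+1)(2μ) h₀^{2μ-1} f₀^{ν-μ}], A₁₂ = (2ν+1)s Σ_{μ=0}^{ν-1} C(2ν;2μ,ν-μ-1,ν-μ+1)(ν-μ+1) h₀^{2μ} f₀^{ν-μ-1}, and A₂₁ = f₀·A₁₂, where C denotes trinomial coefficients C(n; a,b,c) = n!/(a!b!c!). Then the functional derivative identity ∂_{h₀}A₁₂ - ∂_{f₀}A₁₁ = 0 holds. -/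
/-- Trinomial coefficient C(n; a, b, c) = n!/(a!·b!·c!). -/
noncomputable def trinom (n a b c : ℕ) : ℝ :=
  (Nat.factorial n : ℝ) / ((Nat.factorial a : ℝ) * (Nat.factorial b : ℝ) * (Nat.factorial c : ℝ))

/-- The entry A₁₁ of the continuum string-equation coefficient matrix. -/
noncomputable def A11 (ν : ℕ) (s h f : ℝ) : ℝ :=
  1 + (2*(ν:ℝ)+1) * s *
    ∑ μ ∈ Finset.range ν,
      (trinom (2*ν) (2*μ+1) (ν-μ-1) (ν-μ) * h^(2*μ+1) * f^(ν-μ-1)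
        + trinom (2*ν) (2*μ) (ν-μ-1) (ν-μ+1) * (2*(μ:ℝ)) * h^(2*μ-1) * f^(ν-μ))

/-- The entry A₁₂ of the continuum string-equation coefficient matrix. -/
noncomputable def A12 (ν : ℕ) (s h f : ℝ) : ℝ :=
  (2*(ν:ℝ)+1) * s *
    ∑ μ ∈ Finset.range ν,
      trinom (2*ν) (2*μ) (ν-μ-1) (ν-μ+1) * ((ν:ℝ)-(μ:ℝ)+1) * h^(2*μ) * f^(ν-μ-1)

lemma trinom_id (ν μ d : ℕ) (hd : ν = μ + d + 2) :
    trinom (2*ν) (2*(μ+1)) d (d+2) * ((d:ℝ)+2) * (2*(μ:ℝ)+2)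
      = trinom (2*ν) (2*μ+1) (d+1) (d+2) * ((d:ℝ)+1)
        + trinom (2*ν) (2*(μ+1)) d (d+2) * (2*(μ:ℝ)+2) * ((d:ℝ)+1) := by
  subst hd
  unfold trinom
  rw [show 2*(μ+1) = (2*μ+1)+1 by ring]
  rw [Nat.factorial_succ (2*μ+1), Nat.factorial_succ (d+1), Nat.factorial_succ d]
  have h1 : ((2*μ+1).factorial : ℝ) ≠ 0 := by positivity
  have h2 : (d.factorial : ℝ) ≠ 0 := by positivity
  have h3 : ((d+2).factorial : ℝ) ≠ 0 := by positivity
  field_simp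
  push_cast
  ring

lemma derivA12 (ν : ℕ) (s h f : ℝ) :
    deriv (fun x : ℝ => A12 ν s x f) h
      = (2*(ν:ℝ)+1) * s * ∑ μ ∈ Finset.range ν,
          trinom (2*ν) (2*μ) (ν-μ-1) (ν-μ+1) * ((ν:ℝ)-(μ:ℝ)+1)
            * (((2*μ:ℕ):ℝ) * h^(2*μ-1)) * f^(ν-μ-1) := by
  have H : HasDerivAt (fun x : ℝ => A12 ν s x f)
      ((2*(ν:ℝ)+1) * s * ∑ μ ∈ Finset.range ν,
        trinom (2*ν) (2*μ) (ν-μ-1) (ν-μ+1) * ((ν:ℝ)-(μ:ℝ)+1)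
          * (((2*μ:ℕ):ℝ) * h^(2*μ-1)) * f^(ν-μ-1)) h := by
    unfold A12
    exact HasDerivAt.const_mul _ (HasDerivAt.fun_sum fun μ _ =>
      (((hasDerivAt_pow (2*μ) h).const_mul
        (trinom (2*ν) (2*μ) (ν-μ-1) (ν-μ+1) * ((ν:ℝ)-(μ:ℝ)+1))).mul_const _))
  exact H.deriv

lemma derivA11 (ν : ℕ) (s h f : ℝ) :
    deriv (fun y : ℝ => A11 ν s h y) f
      = (2*(ν:ℝ)+1) * s * ∑ μ ∈ Finset.range ν,
          (trinom (2*ν) (2*μ+1) (ν-μ-1) (ν-μ) * h^(2*μ+1) * (((ν-μ-1:ℕ):ℝ) * f^(ν-μ-1-1))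
            + trinom (2*ν) (2*μ) (ν-μ-1) (ν-μ+1) * (2*(μ:ℝ)) * h^(2*μ-1)
              * (((ν-μ:ℕ):ℝ) * f^(ν-μ-1))) := by
  have H : HasDerivAt (fun y : ℝ => A11 ν s h y)
      ((2*(ν:ℝ)+1) * s * ∑ μ ∈ Finset.range ν,
        (trinom (2*ν) (2*μ+1) (ν-μ-1) (ν-μ) * h^(2*μ+1) * (((ν-μ-1:ℕ):ℝ) * f^(ν-μ-1-1))
          + trinom (2*ν) (2*μ) (ν-μ-1) (ν-μ+1) * (2*(μ:ℝ)) * h^(2*μ-1)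
            * (((ν-μ:ℕ):ℝ) * f^(ν-μ-1)))) f := by
    unfold A11
    exact HasDerivAt.const_add _ (HasDerivAt.const_mul _ (HasDerivAt.fun_sum fun μ _ =>
      (((hasDerivAt_pow (ν-μ-1) f).const_mul
        (trinom (2*ν) (2*μ+1) (ν-μ-1) (ν-μ) * h^(2*μ+1))).add
       ((hasDerivAt_pow (ν-μ) f).const_mul
        (trinom (2*ν) (2*μ) (ν-μ-1) (ν-μ+1) * (2*(μ:ℝ)) * h^(2*μ-1))))))
  exact H.deriv

/-- First identity of Lemma 3.7: ∂A₁₂/∂h₀ - ∂A₁₁/∂f₀ = 0. -/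
theorem stmt_8 (ν : ℕ) (hν : 1 ≤ ν) (s h f : ℝ) :
    deriv (fun x : ℝ => A12 ν s x f) h - deriv (fun y : ℝ => A11 ν s h y) f = 0 := by
  rw [derivA12, derivA11, sub_eq_zero]
  congr 1
  obtain ⟨m, rfl⟩ : ∃ m, ν = m + 1 := ⟨ν - 1, by omega⟩
  rw [Finset.sum_add_distrib, Finset.sum_range_succ' _ m, Finset.sum_range_succ _ m,
    Finset.sum_range_succ' _ m]
  have z1 : ((2*0:ℕ):ℝ) = 0 := by norm_num
  have z2 : ((m+1-m-1:ℕ):ℝ) = 0 := by simp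
  simp only [z1, z2, Nat.cast_zero, mul_zero, zero_mul, add_zero, zero_add]
  rw [← Finset.sum_add_distrib]
  refine Finset.sum_congr rfl fun k hk => ?_
  rw [Finset.mem_range] at hk
  obtain ⟨d, rfl⟩ : ∃ d, m = k + d + 1 := ⟨m - k - 1, by omega⟩
  have e1 : k+d+1+1-(k+1)-1 = d := by omega
  have e2 : k+d+1+1-(k+1)+1 = d+2 := by omega
  have e3 : 2*(k+1)-1 = 2*k+1 := by omega
  have e4 : k+d+1+1-k-1 = d+1 := by omega
  have e5 : k+d+1+1-k = d+2 := by omega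
  have e6 : k+d+1+1-k-1-1 = d := by omega
  have e7 : k+d+1+1-(k+1) = d+1 := by omega
  simp only [e1, e2, e3, e4, e5, e6, e7]
  have key := trinom_id (k+d+2) k d rfl
  rw [show 2*(k+d+1+1) = 2*(k+d+2) by ring] at *
  push_cast
  linear_combination (h^(2*k+1) * f^d) * key
end

section
/- With A₁₁, A₁₂, A₂₁ = f₀A₁₂, A₂₂ = A₁₁ as in the continuum string equation matrix for general ν, the identity ∂_{h₀}A₂₂ - f₀·∂_{f₀}A₁₂ - A₁₂ = 0 holds as an identity of polynomials in h₀, f₀. -/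
/-! The trinomial coefficients satisfy `C(n; a+1, b, c) * (a+1) = C(n; a, b, c)` in each slot.
With `k = ν - μ - 1`, differentiating the first family of terms of `A₁₁` in `h₀` gives
`C(2ν; 2μ, k, k+1) h₀^{2μ} f₀^k`; the second family, after the shift `μ ↦ μ + 1`, gives
`k * C(2ν; 2μ, k, k+1) h₀^{2μ} f₀^k`, and the two add up to `C(2ν; 2μ, k, k) h₀^{2μ} f₀^k`.
Likewise `∂_{f₀}(f₀ A₁₂)` has coefficients `(k+2)(k+1) C(2ν; 2μ, k, k+2) = C(2ν; 2μ, k, k)`. -/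

open Finset

lemma trinom_succ_left_mul (n a b c : ℕ) : trinom n (a + 1) b c * (a + 1) = trinom n a b c := by
  unfold trinom
  push_cast [Nat.factorial_succ]
  field_simp

lemma trinom_succ_middle_mul (n a b c : ℕ) : trinom n a (b + 1) c * (b + 1) = trinom n a b c := by
  unfold trinom
  push_cast [Nat.factorial_succ]
  field_simp

lemma trinom_succ_right_mul (n a b c : ℕ) : trinom n a b (c + 1) * (c + 1) = trinom n a b c := by
  unfold trinom
  push_cast [Nat.factorial_succ]
  field_simp

lemma Finset.sum_range_succ_eq_of_shift {M : Type*} [AddCommMonoid M] {f g : ℕ → M} {n : ℕ}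
    (hf : f 0 = 0) (hg : g n = 0) (hfg : ∀ i < n, f (i + 1) = g i) :
    ∑ i ∈ range (n + 1), f i = ∑ i ∈ range (n + 1), g i := by
  rw [sum_range_succ', hf, sum_range_succ g, hg, add_zero, add_zero]
  exact sum_congr rfl fun i hi => hfg i (mem_range.1 hi)

noncomputable def A11DerivH (ν : ℕ) (s h f : ℝ) : ℝ :=
  (2*(ν:ℝ)+1) * s *
    ∑ μ ∈ range ν, trinom (2*ν) (2*μ) (ν-μ-1) (ν-μ-1) * h^(2*μ) * f^(ν-μ-1)

lemma hasDerivAt_A11 (ν : ℕ) (s h f : ℝ) :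
    HasDerivAt (fun x => A11 ν s x f)
      ((2*(ν:ℝ)+1) * s * ∑ μ ∈ range ν,
        (trinom (2*ν) (2*μ) (ν-μ-1) (ν-μ) * h^(2*μ) * f^(ν-μ-1)
          + trinom (2*ν) (2*μ) (ν-μ-1) (ν-μ+1) * (2*μ * (2*μ-1 : ℕ)) * h^(2*μ-2) * f^(ν-μ))) h := by
  refine HasDerivAt.const_add _ (HasDerivAt.const_mul _ (HasDerivAt.fun_sum fun μ _ =>
    ((((hasDerivAt_pow _ h).const_mul _).mul_const _).add
      (((hasDerivAt_pow _ h).const_mul _).mul_const _)).congr_deriv ?_))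
  rw [Nat.add_sub_cancel, show 2 * μ - 1 - 1 = 2 * μ - 2 by omega,
    ← trinom_succ_left_mul _ (2 * μ) (ν - μ - 1) (ν - μ)]
  push_cast
  ring

lemma sum_A11_second_terms_reindex (ν : ℕ) (h f : ℝ) :
    ∑ μ ∈ range ν,
        trinom (2*ν) (2*μ) (ν-μ-1) (ν-μ+1) * (2*μ * (2*μ-1 : ℕ)) * h^(2*μ-2) * f^(ν-μ)
      = ∑ μ ∈ range ν, trinom (2*ν) (2*μ) (ν-μ-1) (ν-μ) * (ν-μ-1 : ℕ) * h^(2*μ) * f^(ν-μ-1) := by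
  rcases ν with _ | n
  · rfl
  refine sum_range_succ_eq_of_shift (by simp) (by simp) fun μ hμ => ?_
  obtain ⟨j, rfl⟩ := Nat.exists_eq_add_of_lt hμ
  have e1 : μ + j + 1 + 1 - (μ + 1) - 1 = j := by omega
  have e2 : μ + j + 1 + 1 - (μ + 1) = j + 1 := by omega
  have e3 : μ + j + 1 + 1 - μ - 1 = j + 1 := by omega
  have e4 : μ + j + 1 + 1 - μ = j + 2 := by omega
  have e5 : 2 * (μ + 1) - 1 = 2 * μ + 1 := by omega
  have e6 : 2 * (μ + 1) - 2 = 2 * μ := by omega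
  have hcoeff : trinom (2 * (μ + j + 2)) (2 * μ + 2) j (j + 2) * ((2 * μ + 2) * (2 * μ + 1))
      = trinom (2 * (μ + j + 2)) (2 * μ) (j + 1) (j + 2) * (j + 1) := by
    rw [trinom_succ_middle_mul, ← trinom_succ_left_mul _ (2 * μ),
      ← trinom_succ_left_mul _ (2 * μ + 1)]
    push_cast
    ring
  rw [e1, e2, e3, e4, e5, e6]
  push_cast
  linear_combination h ^ (2 * μ) * f ^ (j + 1) * hcoeff

theorem deriv_A11 (ν : ℕ) (s h f : ℝ) :
    deriv (fun x => A11 ν s x f) h = A11DerivH ν s h f := by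
  rw [(hasDerivAt_A11 ν s h f).deriv, sum_add_distrib, sum_A11_second_terms_reindex,
    ← sum_add_distrib, A11DerivH]
  congr 1
  refine sum_congr rfl fun μ hμ => ?_
  obtain ⟨k, rfl⟩ := Nat.exists_eq_add_of_lt (mem_range.1 hμ)
  simp only [add_assoc, Nat.add_sub_cancel_left, Nat.add_sub_cancel]
  rw [← trinom_succ_right_mul _ _ k k]
  ring

lemma hasDerivAt_A12 (ν : ℕ) (s h f : ℝ) :
    HasDerivAt (fun y => A12 ν s h y)
      ((2*(ν:ℝ)+1) * s * ∑ μ ∈ range ν, trinom (2*ν) (2*μ) (ν-μ-1) (ν-μ+1) * ((ν:ℝ)-(μ:ℝ)+1)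
        * h^(2*μ) * ((ν-μ-1 : ℕ) * f^(ν-μ-1-1))) f :=
  (HasDerivAt.fun_sum fun _ _ => (hasDerivAt_pow _ f).const_mul _).const_mul _

theorem mul_deriv_A12_add_A12 (ν : ℕ) (s h f : ℝ) :
    f * deriv (fun y => A12 ν s h y) f + A12 ν s h f = A11DerivH ν s h f := by
  rw [(hasDerivAt_A12 ν s h f).deriv, A12, A11DerivH, mul_left_comm, ← mul_add, mul_sum,
    ← sum_add_distrib]
  congr 1
  refine sum_congr rfl fun μ hμ => ?_
  obtain ⟨k, rfl⟩ := Nat.exists_eq_add_of_lt (mem_range.1 hμ)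
  simp only [add_assoc, Nat.add_sub_cancel_left, Nat.add_sub_cancel]
  rw [← trinom_succ_right_mul _ _ k k, ← trinom_succ_right_mul _ _ k (k + 1)]
  rcases k with _ | k
  · simp
  · push_cast
    ring

theorem stmt_9_general (ν : ℕ) (s h f : ℝ) :
    deriv (fun x : ℝ => A11 ν s x f) h - f * deriv (fun y : ℝ => A12 ν s h y) f
      - A12 ν s h f = 0 := by
  rw [deriv_A11, ← mul_deriv_A12_add_A12]
  ring

/-- Second identity of Lemma 3.7: ∂_{h₀}A₂₂ - f₀·∂_{f₀}A₁₂ - A₁₂ = 0 (with A₂₂ = A₁₁). -/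
theorem stmt_9 (ν : ℕ) (hν : 1 ≤ ν) (s h f : ℝ) :
    deriv (fun x : ℝ => A11 ν s x f) h - f * deriv (fun y : ℝ => A12 ν s h y) f
      - A12 ν s h f = 0 :=
  stmt_9_general ν s h f
end
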